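/- arXiv:0707.2578 — 3 statements merged into one kernel-verified Lean document; each statement's English description precedes it below -/
import Mathlib

section
/- Let $\mu$ be a measure of compact support in $\mathbb{C}$, let $M_z$ be multiplication by $z$ on $L^2(\mathbb{C}, d\mu)$, and let $Q_n$ be the orthogonal projection onto polynomials of degree at most $n$. Then for every $\ell \geq 1$, the operator $Q_n M_z^\ell Q_n - (Q_n M_z Q_n)^\ell$ has rank at most $\ell$ and operator norm at most $2 N(\mu)^\ell$, where $N(\mu) = \sup\{|z| : z \in \mathrm{supp}(\mu)\}$. -/
/-!
On the monomials `z^k ∈ L²(μ)` the operator `M_z` is the shift `z^k ↦ z^(k+1)`, and so is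
`Q M_z Q` as long as the degree stays `≤ n`. Hence `Q M_z^ℓ Q - (Q M_z Q)^ℓ` kills `z^k` for
`k + ℓ ≤ n`; since it also factors through `Q`, whose range is spanned by `1, …, z^n`, its range is
spanned by the images of the `ℓ` top monomials. The norm bound is the triangle inequality with
`‖Q‖ ≤ 1` (an orthogonal projection) and `‖M_z‖ ≤ N(μ)` (as `|z| ≤ N(μ)` `μ`-a.e.).
-/

open MeasureTheory Polynomial Filter

noncomputable section

/-- The (topological) support of a measure on `ℂ`. -/
def msupport (μ : Measure ℂ) : Set ℂ := {z | ∀ U ∈ nhds z, 0 < μ U}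

/-- `N(μ) = sup {|z| : z ∈ supp μ}`. -/
def Nmu (μ : Measure ℂ) : ℝ := sSup ((fun z => ‖z‖) '' msupport μ)

-- Products are nested to the right so that this unfolds to the `∘L` form of the statement.
def compressionDefect {R : Type*} [Ring R] (q m : R) (ℓ : ℕ) : R :=
  q * (m ^ ℓ * q) - (q * (m * q)) ^ ℓ

section Compression

variable {R : Type*} [Ring R] {q m : R} {ℓ : ℕ}

lemma map_compressionDefect {S F : Type*} [Ring S] [FunLike F R S] [RingHomClass F R S] (f : F)
    (q m : R) (ℓ : ℕ) : f (compressionDefect q m ℓ) = compressionDefect (f q) (f m) ℓ := by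
  simp only [compressionDefect, map_sub, map_mul, map_pow]

lemma compressionDefect_mul_of_isIdempotentElem (hq : IsIdempotentElem q) (hℓ : 0 < ℓ) :
    compressionDefect q m ℓ * q = compressionDefect q m ℓ := by
  obtain ⟨j, rfl⟩ := Nat.exists_eq_add_of_lt hℓ
  simp only [compressionDefect, sub_mul, zero_add, pow_succ, mul_assoc, hq.eq]

end Compression

section Normed

variable {R : Type*} [SeminormedRing R] {q m : R} {ℓ : ℕ}

lemma norm_mul_mul_le_of_norm_le_one (hq : ‖q‖ ≤ 1) (x : R) : ‖q * (x * q)‖ ≤ ‖x‖ := calc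
  ‖q * (x * q)‖ ≤ ‖q‖ * (‖x‖ * ‖q‖) :=
    (norm_mul_le _ _).trans (by gcongr; exact norm_mul_le _ _)
  _ ≤ 1 * (‖x‖ * 1) := by gcongr
  _ = ‖x‖ := by ring

lemma norm_compressionDefect_le {c : ℝ} (hq : ‖q‖ ≤ 1) (hm : ‖m‖ ≤ c) (hℓ : 0 < ℓ) :
    ‖compressionDefect q m ℓ‖ ≤ 2 * c ^ ℓ := by
  have hpow : ∀ x : R, ‖x‖ ≤ c → ‖x ^ ℓ‖ ≤ c ^ ℓ := fun x hx =>
    (norm_pow_le' x hℓ).trans (pow_le_pow_left₀ (norm_nonneg x) hx ℓ)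
  calc ‖compressionDefect q m ℓ‖ ≤ ‖q * (m ^ ℓ * q)‖ + ‖(q * (m * q)) ^ ℓ‖ :=
        norm_sub_le _ _
    _ ≤ c ^ ℓ + c ^ ℓ := by
      gcongr
      · exact (norm_mul_mul_le_of_norm_le_one hq _).trans (hpow m hm)
      · exact hpow _ ((norm_mul_mul_le_of_norm_le_one hq m).trans hm)
    _ = 2 * c ^ ℓ := by ring

end Normed

section Shift

variable {K V : Type*} [Ring K] [AddCommGroup V] [Module K V] {q m : Module.End K V}
  {g : ℕ → V} {n ℓ : ℕ}

lemma pow_apply_of_shift (hm : ∀ k, m (g k) = g (k + 1)) (j k : ℕ) :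
    (m ^ j) (g k) = g (k + j) := by
  induction j generalizing k with
  | zero => simp
  | succ j ih => rw [pow_succ, Module.End.mul_apply, hm, ih, add_right_comm, add_assoc]

lemma compression_pow_apply_of_shift (hm : ∀ k, m (g k) = g (k + 1))
    (hqg : ∀ k ≤ n, q (g k) = g k) {j k : ℕ} (hjk : k + j ≤ n) :
    ((q * (m * q)) ^ j) (g k) = g (k + j) := by
  induction j generalizing k with
  | zero => simp
  | succ j ih =>
    rw [pow_succ, Module.End.mul_apply, Module.End.mul_apply, Module.End.mul_apply,
      hqg k (by omega), hm, hqg (k + 1) (by omega), ih (by omega), add_right_comm, add_assoc]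

lemma compressionDefect_apply_of_shift (hm : ∀ k, m (g k) = g (k + 1))
    (hqg : ∀ k ≤ n, q (g k) = g k) {k : ℕ} (hkℓ : k + ℓ ≤ n) :
    compressionDefect q m ℓ (g k) = 0 := by
  rw [compressionDefect, LinearMap.sub_apply, Module.End.mul_apply, Module.End.mul_apply,
    hqg k (by omega), pow_apply_of_shift hm, hqg _ hkℓ,
    compression_pow_apply_of_shift hm hqg hkℓ, sub_self]

lemma rank_compressionDefect_le_of_shift [StrongRankCondition K] (hℓ : 0 < ℓ)
    (hm : ∀ k, m (g k) = g (k + 1)) (hqg : ∀ k ≤ n, q (g k) = g k)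
    (hq : LinearMap.range q ≤ Submodule.span K (g '' Set.Iic n)) :
    LinearMap.rank (compressionDefect q m ℓ) ≤ ℓ := by
  classical
  have hq_idem : IsIdempotentElem q := by
    refine LinearMap.ext fun f => ?_
    refine LinearMap.eqOn_span' (f := q) (g := LinearMap.id) ?_ (hq ⟨f, rfl⟩)
    rintro _ ⟨k, hk, rfl⟩
    exact hqg k hk
  let highImages : Finset V :=
    (Finset.Icc (n + 1 - ℓ) n).image fun k => compressionDefect q m ℓ (g k)
  have hrange : LinearMap.range (compressionDefect q m ℓ) ≤ Submodule.span K highImages := by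
    rw [← compressionDefect_mul_of_isIdempotentElem hq_idem hℓ, Module.End.mul_eq_comp,
      LinearMap.range_comp]
    refine (Submodule.map_mono hq).trans ?_
    rw [Submodule.map_span, Submodule.span_le]
    rintro _ ⟨_, ⟨k, hk, rfl⟩, rfl⟩
    by_cases hkℓ : k + ℓ ≤ n
    · simp only [compressionDefect_apply_of_shift hm hqg hkℓ, SetLike.mem_coe,
        Submodule.zero_mem]
    · exact Submodule.subset_span (Finset.mem_image_of_mem _ (Finset.mem_Icc.2 ⟨by omega, hk⟩))
  calc LinearMap.rank (compressionDefect q m ℓ)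
        ≤ Module.rank K (Submodule.span K (highImages : Set V)) := Submodule.rank_mono hrange
    _ ≤ highImages.card := rank_span_finset_le highImages
    _ ≤ (Finset.Icc (n + 1 - ℓ) n).card := Nat.cast_le.2 Finset.card_image_le
    _ ≤ ℓ := by rw [Nat.card_Icc]; exact_mod_cast (by omega)

end Shift

section Monomials

variable {μ : Measure ℂ}

lemma ae_mem_msupport (μ : Measure ℂ) : ∀ᵐ z ∂μ, z ∈ msupport μ := by
  rw [ae_iff]
  refine measure_null_of_locally_null _ fun z hz => ?_
  simp only [Set.mem_ofPred_eq, msupport, not_forall, not_lt, nonpos_iff_eq_zero] at hz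
  obtain ⟨U, hU, hU0⟩ := hz
  exact ⟨U, nhdsWithin_le_nhds hU, hU0⟩

lemma Nmu_nonneg (μ : Measure ℂ) : 0 ≤ Nmu μ :=
  Real.sSup_nonneg <| by rintro _ ⟨z, -, rfl⟩; exact norm_nonneg z

lemma ae_norm_le_Nmu (hcomp : IsCompact (msupport μ)) : ∀ᵐ z ∂μ, ‖z‖ ≤ Nmu μ := by
  filter_upwards [ae_mem_msupport μ] with z hz
  exact le_csSup (hcomp.image continuous_norm).bddAbove ⟨z, hz, rfl⟩

lemma norm_le_Nmu_of_ae_eq_mul (hcomp : IsCompact (msupport μ))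
    {M : Lp ℂ 2 μ →L[ℂ] Lp ℂ 2 μ} (hM : ∀ f : Lp ℂ 2 μ, (M f : ℂ → ℂ) =ᵐ[μ] fun z => z * f z) :
    ‖M‖ ≤ Nmu μ := by
  refine M.opNorm_le_bound (Nmu_nonneg μ) fun f => Lp.norm_le_mul_norm_of_ae_le_mul ?_
  filter_upwards [hM f, ae_norm_le_Nmu hcomp] with z hMf hz
  rw [hMf, norm_mul]
  gcongr

variable [IsFiniteMeasure μ]

lemma memLp_pow_of_isCompact_msupport (hcomp : IsCompact (msupport μ)) (k : ℕ) :
    MemLp (fun z : ℂ => z ^ k) 2 μ := by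
  refine MemLp.of_bound (continuous_pow k).aestronglyMeasurable (Nmu μ ^ k) ?_
  filter_upwards [ae_norm_le_Nmu hcomp] with z hz
  rw [norm_pow]
  gcongr

def monomialLp (hcomp : IsCompact (msupport μ)) (k : ℕ) : Lp ℂ 2 μ :=
  (memLp_pow_of_isCompact_msupport hcomp k).toLp _

variable (hcomp : IsCompact (msupport μ))

lemma coeFn_monomialLp (k : ℕ) : (monomialLp hcomp k : ℂ → ℂ) =ᵐ[μ] fun z => z ^ k :=
  MemLp.coeFn_toLp _

lemma monomialLp_succ_of_ae_eq_mul {M : Lp ℂ 2 μ →L[ℂ] Lp ℂ 2 μ}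
    (hM : ∀ f : Lp ℂ 2 μ, (M f : ℂ → ℂ) =ᵐ[μ] fun z => z * f z) (k : ℕ) :
    M (monomialLp hcomp k) = monomialLp hcomp (k + 1) := by
  refine Lp.ext ?_
  filter_upwards [hM (monomialLp hcomp k), coeFn_monomialLp hcomp k,
    coeFn_monomialLp hcomp (k + 1)] with z hMz hk hk1
  rw [hMz, hk, hk1, pow_succ']

lemma span_polynomials_eq_span_monomialLp (n : ℕ) :
    Submodule.span ℂ {f : Lp ℂ 2 μ | ∃ p : ℂ[X], p.natDegree ≤ n ∧
      (f : ℂ → ℂ) =ᵐ[μ] fun z => p.eval z} =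
      Submodule.span ℂ (monomialLp hcomp '' Set.Iic n) := by
  apply le_antisymm
  · rw [Submodule.span_le]
    rintro f ⟨p, hp, hf⟩
    have hf_sum : f = ∑ k ∈ Finset.range (n + 1), p.coeff k • monomialLp hcomp k := by
      refine Lp.ext ?_
      have hterms : ∀ᵐ z ∂μ, ∀ k ∈ Finset.range (n + 1),
          (p.coeff k • monomialLp hcomp k : Lp ℂ 2 μ) z = p.coeff k * z ^ k := by
        rw [eventually_all_finset]
        intro k _
        filter_upwards [Lp.coeFn_smul (p.coeff k) (monomialLp hcomp k),
          coeFn_monomialLp hcomp k] with z hsmul hk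
        rw [hsmul, Pi.smul_apply, hk, smul_eq_mul]
      filter_upwards [hf, Lp.coeFn_fun_finsetSum (Finset.range (n + 1))
        fun k => p.coeff k • monomialLp hcomp k, hterms] with z hfz hsum hterms
      rw [hfz, hsum, eval_eq_sum_range' (Nat.lt_succ_of_le hp)]
      exact Finset.sum_congr rfl fun k hk => (hterms k hk).symm
    rw [hf_sum]
    exact Submodule.sum_mem _ fun k hk => Submodule.smul_mem _ _ <|
      Submodule.subset_span ⟨k, Nat.le_of_lt_succ (Finset.mem_range.1 hk), rfl⟩
  · rw [Submodule.span_le]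
    rintro _ ⟨k, hk, rfl⟩
    refine Submodule.subset_span ⟨X ^ k, by simpa using hk, ?_⟩
    filter_upwards [coeFn_monomialLp hcomp k] with z hz
    rw [hz, eval_X_pow]

end Monomials

theorem stmt0_general (μ : Measure ℂ) [IsFiniteMeasure μ]
    (hcomp : IsCompact (msupport μ))
    (n ℓ : ℕ) (hℓ : 1 ≤ ℓ)
    (M : Lp ℂ 2 μ →L[ℂ] Lp ℂ 2 μ)
    (hM : ∀ f : Lp ℂ 2 μ, (M f : ℂ → ℂ) =ᵐ[μ] fun z => z * f z)
    (S : Submodule ℂ (Lp ℂ 2 μ))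
    (hS : S = Submodule.span ℂ
      {f : Lp ℂ 2 μ | ∃ p : Polynomial ℂ, p.natDegree ≤ n ∧
        (f : ℂ → ℂ) =ᵐ[μ] fun z => p.eval z})
    (Q : Lp ℂ 2 μ →L[ℂ] Lp ℂ 2 μ)
    (hQ1 : ∀ f ∈ S, Q f = f) (hQ2 : ∀ f, Q f ∈ S)
    (hQ3 : ∀ f g : Lp ℂ 2 μ, @inner ℂ _ _ (Q f) g = @inner ℂ _ _ f (Q g)) :
    LinearMap.rank (Q ∘L (M ^ ℓ : Lp ℂ 2 μ →L[ℂ] Lp ℂ 2 μ) ∘L Q - (Q ∘L M ∘L Q) ^ ℓ).toLinearMap ≤ ℓ ∧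
      ‖Q ∘L (M ^ ℓ : Lp ℂ 2 μ →L[ℂ] Lp ℂ 2 μ) ∘L Q - (Q ∘L M ∘L Q) ^ ℓ‖ ≤ 2 * Nmu μ ^ ℓ := by
  rw [span_polynomials_eq_span_monomialLp hcomp] at hS
  subst hS
  change LinearMap.rank (compressionDefect Q M ℓ).toLinearMap ≤ ℓ ∧
    ‖compressionDefect Q M ℓ‖ ≤ 2 * Nmu μ ^ ℓ
  have hQ : IsStarProjection Q :=
    ⟨ContinuousLinearMap.ext fun f => hQ1 _ (hQ2 f),
      ContinuousLinearMap.isSelfAdjoint_iff_isSymmetric.2 hQ3⟩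
  constructor
  · rw [← ContinuousLinearMap.toLinearMapRingHom_apply, map_compressionDefect]
    exact rank_compressionDefect_le_of_shift hℓ (monomialLp_succ_of_ae_eq_mul hcomp hM)
      (fun k hk => hQ1 _ (Submodule.subset_span ⟨k, hk, rfl⟩))
      (by rintro _ ⟨f, rfl⟩; exact hQ2 f)
  · exact norm_compressionDefect_le (hQ.norm_le Q) (norm_le_Nmu_of_ae_eq_mul hcomp hM) hℓ

/-- Proposition 2.1: `Qₙ M_z^ℓ Qₙ - (Qₙ M_z Qₙ)^ℓ` has rank at most `ℓ` and
norm at most `2 N(μ)^ℓ`. -/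
theorem stmt0 (μ : Measure ℂ) [IsFiniteMeasure μ]
    (hcomp : IsCompact (msupport μ)) (hinf : (msupport μ).Infinite)
    (n ℓ : ℕ) (hℓ : 1 ≤ ℓ)
    (M : Lp ℂ 2 μ →L[ℂ] Lp ℂ 2 μ)
    (hM : ∀ f : Lp ℂ 2 μ, (M f : ℂ → ℂ) =ᵐ[μ] fun z => z * f z)
    (S : Submodule ℂ (Lp ℂ 2 μ))
    (hS : S = Submodule.span ℂ
      {f : Lp ℂ 2 μ | ∃ p : Polynomial ℂ, p.natDegree ≤ n ∧
        (f : ℂ → ℂ) =ᵐ[μ] fun z => p.eval z})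
    (Q : Lp ℂ 2 μ →L[ℂ] Lp ℂ 2 μ)
    (hQ1 : ∀ f ∈ S, Q f = f) (hQ2 : ∀ f, Q f ∈ S)
    (hQ3 : ∀ f g : Lp ℂ 2 μ, @inner ℂ _ _ (Q f) g = @inner ℂ _ _ f (Q g)) :
    LinearMap.rank (Q ∘L (M ^ ℓ : Lp ℂ 2 μ →L[ℂ] Lp ℂ 2 μ) ∘L Q - (Q ∘L M ∘L Q) ^ ℓ).toLinearMap ≤ ℓ ∧
      ‖Q ∘L (M ^ ℓ : Lp ℂ 2 μ →L[ℂ] Lp ℂ 2 μ) ∘L Q - (Q ∘L M ∘L Q) ^ ℓ‖ ≤ 2 * Nmu μ ^ ℓ :=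
  stmt0_general μ hcomp n ℓ hℓ M hM S hS Q hQ1 hQ2 hQ3
end
end

section
/- Let $\mu$ be a measure on $\mathbb{C}$ of compact, infinite support, let $X_{n+1}(z, d\mu)$ be the monic orthogonal polynomial of degree $n+1$ for $\mu$, and let $M_z^{(n)} = Q_n M_z Q_n$ act on the range of $Q_n$ (polynomials of degree at most $n$). Then for all $w \in \mathbb{C}$, $\det(w - M_z^{(n)}) = X_{n+1}(w, d\mu)$, where the determinant is taken on the $(n+1)$-dimensional space $\mathrm{ran}(Q_n)$. -/
/-!
The constant `1` is a cyclic vector for `T = Qₙ M_z Qₙ` on `ran Qₙ`: for `i ≤ n` its `i`-th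
iterate is `zⁱ`, and these `n + 1` monomials span the `(n + 1)`-dimensional space `ran Qₙ`, so
they are linearly independent. Writing `X = z^{n+1} + r` with `deg r ≤ n` gives
`X(T) 1 = Qₙ z^{n+1} + r = Qₙ X = 0`, because `X ⊥ ran Qₙ`. By Cayley–Hamilton the characteristic
polynomial also kills `1`; the difference of the two monic polynomials has degree `≤ n`, so it
vanishes by the linear independence of the iterates. Finally `det (w - T) = χ_T(w)`.
-/

open MeasureTheory Polynomial Filter

noncomputable section

open Module

theorem LinearMap.charpoly_eq_of_aeval_apply_eq_zero {K V : Type*} [Field K] [AddCommGroup V]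
    [Module K V] [FiniteDimensional K V] (T : V →ₗ[K] V) (v : V)
    (hv : LinearIndependent K fun i : Fin (finrank K V) => (T ^ (i : ℕ)) v)
    {p : K[X]} (hp : p.IsMonicOfDegree (finrank K V)) (hpv : aeval T p v = 0) :
    T.charpoly = p := by
  have hχ : T.charpoly.IsMonicOfDegree (finrank K V) :=
    ⟨T.charpoly_natDegree, T.charpoly_monic⟩
  obtain hd | hd := eq_or_ne (finrank K V) 0
  · rw [hd, isMonicOfDegree_zero_iff] at hp hχ
    rw [hp, hχ]
  have hlt := hχ.natDegree_sub_lt hd hp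
  have hsum : ∑ i : Fin (finrank K V), (T.charpoly - p).coeff i • (T ^ (i : ℕ)) v = 0 := by
    have h : aeval T (T.charpoly - p) v = 0 := by simp [T.aeval_self_charpoly, hpv]
    rwa [aeval_eq_sum_range' hlt, LinearMap.sum_apply,
      ← Fin.sum_univ_eq_sum_range (fun i => ((T.charpoly - p).coeff i • T ^ i) v)] at h
  have hcoeff := Fintype.linearIndependent_iff.mp hv _ hsum
  refine sub_eq_zero.mp <| Polynomial.ext fun i => ?_
  obtain hi | hi := lt_or_ge i (finrank K V)
  · simpa using hcoeff ⟨i, hi⟩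
  · simpa using coeff_eq_zero_of_natDegree_lt (hlt.trans_le hi)

theorem LinearMap.IsSymmetric.apply_eq_zero_of_mem_orthogonal {𝕜 E : Type*} [RCLike 𝕜]
    [NormedAddCommGroup E] [InnerProductSpace 𝕜 E] {Q : E →ₗ[𝕜] E} (hsymm : Q.IsSymmetric)
    {S : Submodule 𝕜 E} (hQS : ∀ f ∈ S, Q f = f) (hQ : ∀ f, Q f ∈ S) {f : E} (hf : f ∈ Sᗮ) :
    Q f = 0 := by
  refine (inner_self_eq_zero (𝕜 := 𝕜)).mp ?_
  rw [hsymm, hQS _ (hQ f)]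
  exact S.inner_left_of_mem_orthogonal (hQ f) hf

structure IsCompressionOfMulX {K E : Type*} [Field K] [AddCommGroup E] [Module K E]
    (ℓ : K[X] →ₗ[K] E) (M : E → E) (Q : E →ₗ[K] E) (n : ℕ) {S : Submodule K E}
    (T : S →ₗ[K] S) : Prop where
  eq_map_degreeLE : S = (degreeLE K n).map ℓ
  map_mul_X : ∀ p, M (ℓ p) = ℓ (X * p)
  proj_apply : ∀ f ∈ S, Q f = f
  coe_apply : ∀ f : S, (T f : E) = Q (M f)

namespace IsCompressionOfMulX

variable {K E : Type*} [Field K] [AddCommGroup E] [Module K E] {ℓ : K[X] →ₗ[K] E}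
  {M : E → E} {Q : E →ₗ[K] E} {n : ℕ} {S : Submodule K E} {T : S →ₗ[K] S}
  (h : IsCompressionOfMulX ℓ M Q n T)
include h

theorem mem_of_natDegree_le {p : K[X]} (hp : p.natDegree ≤ n) : ℓ p ∈ S :=
  h.eq_map_degreeLE ▸ Submodule.mem_map_of_mem (mem_degreeLE.2 (natDegree_le_iff_degree_le.1 hp))

theorem span_range_X_pow :
    Submodule.span K (Set.range fun i : Fin (n + 1) => ℓ (X ^ (i : ℕ))) = S := by
  classical
  rw [h.eq_map_degreeLE, degreeLE_eq_span_X_pow, Submodule.map_span, Finset.coe_image,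
    Finset.coe_range, ← Set.image_comp, ← Fin.range_val (n := n + 1), ← Set.range_comp]
  rfl

variable {v : S} (hv : (v : E) = ℓ 1)
include hv

theorem coe_pow_apply {i : ℕ} (hi : i ≤ n) : ((T ^ i) v : E) = ℓ (X ^ i) := by
  induction i with
  | zero => simpa using hv
  | succ i ih =>
    rw [pow_succ', Module.End.mul_apply, h.coe_apply, ih (by omega), h.map_mul_X, ← pow_succ',
      h.proj_apply _ (h.mem_of_natDegree_le (natDegree_X_pow_le _ |>.trans hi))]

theorem coe_aeval_apply {p : K[X]} (hp : p.natDegree ≤ n) : (aeval T p v : E) = ℓ p := by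
  conv_rhs => rw [p.as_sum_range' (n + 1) (by omega)]
  rw [aeval_eq_sum_range' (show p.natDegree < n + 1 by omega), LinearMap.sum_apply,
    Submodule.coe_sum, map_sum]
  refine Finset.sum_congr rfl fun i hi => ?_
  rw [LinearMap.smul_apply, Submodule.coe_smul, ← smul_X_eq_monomial, map_smul,
    h.coe_pow_apply hv (Nat.lt_succ_iff.mp (Finset.mem_range.mp hi))]

theorem aeval_apply_eq_zero {p : K[X]} (hp : p.IsMonicOfDegree (n + 1)) (hQp : Q (ℓ p) = 0) :
    aeval T p v = 0 := by
  obtain ⟨r, rfl, hr⟩ := hp.exists_natDegree_lt n.succ_ne_zero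
  have hr' : r.natDegree ≤ n := Nat.lt_succ_iff.mp hr
  apply Subtype.ext
  rw [map_add, LinearMap.add_apply, Submodule.coe_add, pow_succ', map_mul, map_pow, aeval_X,
    Module.End.mul_apply, h.coe_apply, h.coe_pow_apply hv le_rfl, h.coe_aeval_apply hv hr',
    ← h.proj_apply _ (h.mem_of_natDegree_le hr'), h.map_mul_X, ← pow_succ', ← map_add,
    ← map_add, hQp, Submodule.coe_zero]

theorem linearIndependent_pow_apply (hfin : finrank K S = n + 1) :
    LinearIndependent K fun i : Fin (n + 1) => (T ^ (i : ℕ)) v := by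
  have hcoe : S.subtype ∘ (fun i : Fin (n + 1) => (T ^ (i : ℕ)) v) =
      fun i : Fin (n + 1) => ℓ (X ^ (i : ℕ)) :=
    funext fun i => h.coe_pow_apply hv (Nat.lt_succ_iff.mp i.2)
  refine LinearIndependent.of_comp S.subtype ?_
  rw [hcoe, linearIndependent_iff_card_eq_finrank_span, Set.finrank, h.span_range_X_pow,
    Fintype.card_fin, hfin]

omit hv in
theorem charpoly_eq [FiniteDimensional K S] (hfin : finrank K S = n + 1) {p : K[X]}
    (hp : p.IsMonicOfDegree (n + 1)) (hQp : Q (ℓ p) = 0) : T.charpoly = p := by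
  let v : S := ⟨ℓ 1, h.mem_of_natDegree_le (natDegree_one.trans_le n.zero_le)⟩
  refine T.charpoly_eq_of_aeval_apply_eq_zero v ?_ (hfin ▸ hp) (h.aeval_apply_eq_zero rfl hp hQp)
  rw [hfin]
  exact h.linearIndependent_pow_apply rfl hfin

end IsCompressionOfMulX

theorem msupport_eq_support (μ : Measure ℂ) : msupport μ = μ.support :=
  Set.ext fun z => (μ.mem_support_iff_forall z).symm

theorem Continuous.memLp_of_isCompact_measureSupport {X F : Type*} [TopologicalSpace X]
    [MeasurableSpace X] [OpensMeasurableSpace X] [HereditarilyLindelofSpace X]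
    [TopologicalSpace.PseudoMetrizableSpace X] [NormedAddCommGroup F]
    {μ : Measure X} [IsFiniteMeasure μ] (hμ : IsCompact μ.support) {f : X → F}
    (hf : Continuous f) (p : ENNReal) : MemLp f p μ := by
  obtain ⟨C, hC⟩ := hμ.exists_bound_of_continuousOn hf.continuousOn
  exact .of_bound hf.aestronglyMeasurable C <|
    mem_of_superset (Measure.support_mem_ae (μ := μ)) hC

section

variable {μ : Measure ℂ} [IsFiniteMeasure μ]

theorem memLp_eval (hμ : IsCompact μ.support) (p : ℂ[X]) : MemLp (fun z => p.eval z) 2 μ :=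
  p.continuous.memLp_of_isCompact_measureSupport hμ 2

def evalLp (hμ : IsCompact μ.support) : ℂ[X] →ₗ[ℂ] Lp ℂ 2 μ where
  toFun p := (memLp_eval hμ p).toLp
  map_add' p q := by simp only [eval_add]; exact MemLp.toLp_add _ _
  map_smul' c p := by simp only [eval_smul]; exact MemLp.toLp_const_smul c _

variable (hμ : IsCompact μ.support)

theorem coeFn_evalLp (p : ℂ[X]) : evalLp hμ p =ᵐ[μ] fun z => p.eval z :=
  (memLp_eval hμ p).coeFn_toLp

theorem eq_evalLp_of_ae_eq {f : Lp ℂ 2 μ} {p : ℂ[X]} (hf : f =ᵐ[μ] fun z => p.eval z) :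
    f = evalLp hμ p :=
  Lp.ext (hf.trans (coeFn_evalLp hμ p).symm)

theorem map_evalLp_of_ae_eq_mul {M : Lp ℂ 2 μ → Lp ℂ 2 μ}
    (hM : ∀ f : Lp ℂ 2 μ, (M f : ℂ → ℂ) =ᵐ[μ] fun z => z * f z) (p : ℂ[X]) :
    M (evalLp hμ p) = evalLp hμ (X * p) := by
  refine eq_evalLp_of_ae_eq hμ ?_
  filter_upwards [hM (evalLp hμ p), coeFn_evalLp hμ p] with z hMz hz
  simp [hMz, hz]

theorem inner_evalLp (p q : ℂ[X]) :
    inner ℂ (evalLp hμ p) (evalLp hμ q) = ∫ z, (starRingEnd ℂ) (p.eval z) * q.eval z ∂μ := by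
  rw [L2.inner_def]
  refine integral_congr_ae ?_
  filter_upwards [coeFn_evalLp hμ p, coeFn_evalLp hμ q] with z hp hq
  simp [hp, hq, mul_comm]

theorem span_ae_eq_eval_eq_map_degreeLE (n : ℕ) :
    Submodule.span ℂ {f : Lp ℂ 2 μ | ∃ p : ℂ[X], p.natDegree ≤ n ∧
      (f : ℂ → ℂ) =ᵐ[μ] fun z => p.eval z} = (degreeLE ℂ n).map (evalLp hμ) := by
  have : {f : Lp ℂ 2 μ | ∃ p : ℂ[X], p.natDegree ≤ n ∧ (f : ℂ → ℂ) =ᵐ[μ] fun z => p.eval z} =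
      evalLp hμ '' (degreeLE ℂ n) := by
    ext f
    simp only [Set.mem_ofPred_eq, Set.mem_image, SetLike.mem_coe, mem_degreeLE,
      ← natDegree_le_iff_degree_le]
    constructor
    · rintro ⟨p, hp, hf⟩
      exact ⟨p, hp, (eq_evalLp_of_ae_eq hμ hf).symm⟩
    · rintro ⟨p, hp, rfl⟩
      exact ⟨p, hp, coeFn_evalLp hμ p⟩
  rw [this, Submodule.span_image, Submodule.span_eq]

theorem evalLp_mem_orthogonal {n : ℕ} {p : ℂ[X]}
    (hp : ∀ q : ℂ[X], q.natDegree ≤ n → ∫ z, (starRingEnd ℂ) (q.eval z) * p.eval z ∂μ = 0) :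
    evalLp hμ p ∈ ((degreeLE ℂ n).map (evalLp hμ))ᗮ := by
  rw [Submodule.mem_orthogonal]
  rintro _ ⟨q, hq, rfl⟩
  rw [inner_evalLp]
  exact hp q (natDegree_le_iff_degree_le.2 (mem_degreeLE.1 hq))

end

theorem stmt1_general (μ : Measure ℂ) [IsFiniteMeasure μ]
    (hcomp : IsCompact (msupport μ))
    (n : ℕ)
    (M : Lp ℂ 2 μ →L[ℂ] Lp ℂ 2 μ)
    (hM : ∀ f : Lp ℂ 2 μ, (M f : ℂ → ℂ) =ᵐ[μ] fun z => z * f z)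
    (S : Submodule ℂ (Lp ℂ 2 μ))
    (hS : S = Submodule.span ℂ
      {f : Lp ℂ 2 μ | ∃ p : Polynomial ℂ, p.natDegree ≤ n ∧
        (f : ℂ → ℂ) =ᵐ[μ] fun z => p.eval z})
    (hfin : Module.finrank ℂ S = n + 1)
    (Q : Lp ℂ 2 μ →L[ℂ] Lp ℂ 2 μ)
    (hQ1 : ∀ f ∈ S, Q f = f) (hQ2 : ∀ f, Q f ∈ S)
    (hQ3 : ∀ f g : Lp ℂ 2 μ, @inner ℂ _ _ (Q f) g = @inner ℂ _ _ f (Q g))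
    (T : S →ₗ[ℂ] S) (hT : ∀ f : S, (T f : Lp ℂ 2 μ) = Q (M f))
    (X : Polynomial ℂ) (hXmonic : X.Monic) (hXdeg : X.natDegree = n + 1)
    (hXorth : ∀ q : Polynomial ℂ, q.natDegree ≤ n →
      ∫ z, (starRingEnd ℂ) (q.eval z) * X.eval z ∂μ = 0) :
    ∀ w : ℂ, LinearMap.det ((w • (LinearMap.id : S →ₗ[ℂ] S)) - T) = X.eval w := by
  rw [msupport_eq_support] at hcomp
  have : FiniteDimensional ℂ S := .of_finrank_eq_succ hfin
  have hS' : S = (degreeLE ℂ n).map (evalLp hcomp) :=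
    hS.trans (span_ae_eq_eval_eq_map_degreeLE hcomp n)
  have hQsymm : (Q : Lp ℂ 2 μ →ₗ[ℂ] Lp ℂ 2 μ).IsSymmetric := hQ3
  have hQX : Q (evalLp hcomp X) = 0 :=
    hQsymm.apply_eq_zero_of_mem_orthogonal hQ1 hQ2 (hS' ▸ evalLp_mem_orthogonal hcomp hXorth)
  have hT' : IsCompressionOfMulX (evalLp hcomp) M Q n T :=
    ⟨hS', map_evalLp_of_ae_eq_mul hcomp hM, hQ1, hT⟩
  have hχ : T.charpoly = X := hT'.charpoly_eq hfin ⟨hXdeg, hXmonic⟩ hQX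
  intro w
  rw [← hχ, LinearMap.eval_charpoly, Algebra.algebraMap_eq_smul_one, Module.End.one_eq_id]

/-- Proposition 2.2(i): `det_{ran Qₙ}(w - Qₙ M_z Qₙ) = X_{n+1}(w, dμ)`, where `X_{n+1}`
is the monic orthogonal polynomial of degree `n+1`. -/
theorem stmt1 (μ : Measure ℂ) [IsFiniteMeasure μ]
    (hcomp : IsCompact (msupport μ)) (hinf : (msupport μ).Infinite)
    (n : ℕ)
    (M : Lp ℂ 2 μ →L[ℂ] Lp ℂ 2 μ)
    (hM : ∀ f : Lp ℂ 2 μ, (M f : ℂ → ℂ) =ᵐ[μ] fun z => z * f z)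
    (S : Submodule ℂ (Lp ℂ 2 μ))
    (hS : S = Submodule.span ℂ
      {f : Lp ℂ 2 μ | ∃ p : Polynomial ℂ, p.natDegree ≤ n ∧
        (f : ℂ → ℂ) =ᵐ[μ] fun z => p.eval z})
    (hfin : Module.finrank ℂ S = n + 1)
    (Q : Lp ℂ 2 μ →L[ℂ] Lp ℂ 2 μ)
    (hQ1 : ∀ f ∈ S, Q f = f) (hQ2 : ∀ f, Q f ∈ S)
    (hQ3 : ∀ f g : Lp ℂ 2 μ, @inner ℂ _ _ (Q f) g = @inner ℂ _ _ f (Q g))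
    (T : S →ₗ[ℂ] S) (hT : ∀ f : S, (T f : Lp ℂ 2 μ) = Q (M f))
    (X : Polynomial ℂ) (hXmonic : X.Monic) (hXdeg : X.natDegree = n + 1)
    (hXorth : ∀ q : Polynomial ℂ, q.natDegree ≤ n →
      ∫ z, (starRingEnd ℂ) (q.eval z) * X.eval z ∂μ = 0) :
    ∀ w : ℂ, LinearMap.det ((w • (LinearMap.id : S →ₗ[ℂ] S)) - T) = X.eval w :=
  stmt1_general μ hcomp n M hM S hS hfin Q hQ1 hQ2 hQ3 T hT X hXmonic hXdeg hXorth
end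
end

section
/- Let $E \subset \partial\mathbb{D}$ be a finite union of disjoint closed arcs with complementary gaps $G_1, \dots, G_\ell$, and let $\tilde{T}_n$ be a restricted Chebyshev polynomial of degree $n$ for $E$: a monic polynomial of degree $n$ with all zeros on $\partial\mathbb{D}$ minimizing $\|P\|_E = \sup_{z \in E} |P(z)|$ among all such polynomials. Then $\tilde{T}_n$ has at most one zero in each gap $G_j$. -/
/-!
Suppose two zeros of `T`, counted with multiplicity, lie in one gap. Write them as `q e^{∓ig}`
with `|q| = 1`. The gap is connected and misses `E`, so it contains the arc between them, hence
`Re (z q̄) < cos g` on `E`. On the circle `|z - q e^{-ig}| |z - q e^{ig}| = 2 (cos g - Re (z q̄))`,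
so by compactness of `E` the two zeros can be pushed apart to `q e^{∓ig'}` with
`Re (z q̄) < cos g' < cos g` on `E`. This lowers `|T|` at every point of `E` where `T` does not
vanish, and therefore lowers `sup_E |T|`, contradicting minimality.
-/

open Complex Polynomial

noncomputable section

/-- The closed arc `{e^{iθ} : a ≤ θ ≤ b}` of the unit circle. -/
def arc (a b : ℝ) : Set ℂ := (fun θ : ℝ => Complex.exp (θ * Complex.I)) '' Set.Icc a b

open scoped Real ComplexConjugate

theorem Real.cos_lt_cos_of_lt_of_lt_two_pi_sub {g x : ℝ} (hg : 0 ≤ g) (hgx : g < x)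
    (hx : x < 2 * π - g) : Real.cos x < Real.cos g := by
  rcases le_or_gt x π with hxπ | hxπ
  · exact Real.cos_lt_cos_of_nonneg_of_le_pi hg hxπ hgx
  · rw [← Real.cos_two_pi_sub]
    exact Real.cos_lt_cos_of_nonneg_of_le_pi hg (by linarith) (by linarith)

theorem norm_sub_mul_norm_sub_exp {z q : ℂ} (hz : ‖z‖ = 1) (hq : ‖q‖ = 1) (g : ℝ) :
    ‖z - q * exp (-g * I)‖ * ‖z - q * exp (g * I)‖ = 2 * |(z * conj q).re - Real.cos g| := by
  have hzz : z * conj z = 1 := by rw [mul_conj, normSq_eq_norm_sq, hz]; norm_num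
  have hqq : q * conj q = 1 := by rw [mul_conj, normSq_eq_norm_sq, hq]; norm_num
  have hexp : exp (-g * I) * exp (g * I) = 1 := by rw [← exp_add]; simp
  have hre : ((z * conj q).re : ℂ) * 2 = z * conj q + conj z * q := by
    rw [re_eq_add_conj, map_mul, conj_conj]; ring
  have hcos : (Real.cos g : ℂ) * 2 = exp (g * I) + exp (-g * I) := by
    rw [ofReal_cos, cos, neg_mul]; ring
  have key : (z - q * exp (-g * I)) * (z - q * exp (g * I))
      = q * z * (2 * (((z * conj q).re : ℂ) - (Real.cos g : ℂ))) := by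
    linear_combination (-(q * z)) * hre + (q * z) * hcos - z * z * hqq - q * q * hzz + q * q * hexp
  rw [← norm_mul, key, norm_mul, norm_mul, hq, hz, ← ofReal_sub, norm_mul, norm_real]
  norm_num

theorem norm_sub_mul_norm_sub_exp_lt {z q : ℂ} (hz : ‖z‖ = 1) (hq : ‖q‖ = 1) {g g' : ℝ}
    (hzg' : (z * conj q).re < Real.cos g') (hg : Real.cos g' < Real.cos g) :
    ‖z - q * exp (-g' * I)‖ * ‖z - q * exp (g' * I)‖
      < ‖z - q * exp (-g * I)‖ * ‖z - q * exp (g * I)‖ := by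
  rw [norm_sub_mul_norm_sub_exp hz hq, norm_sub_mul_norm_sub_exp hz hq, abs_of_neg (by linarith),
    abs_of_neg (by linarith)]
  linarith

theorem Real.cos_sub_lt_cos_of_notMem_Icc {θ s t : ℝ} (hθ : θ ∈ Set.Ioc (-π) π) (hs : -π < s)
    (hst : s ≤ t) (ht : t < π) (hθst : θ ∉ Set.Icc s t) :
    Real.cos (θ - (s + t) / 2) < Real.cos ((t - s) / 2) := by
  rw [← Real.cos_abs]
  obtain ⟨hθ₁, hθ₂⟩ := hθ
  rcases not_and_or.mp hθst with h | h <;> rw [not_le] at h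
  · rw [abs_of_neg (by linarith)]
    exact Real.cos_lt_cos_of_lt_of_lt_two_pi_sub (by linarith) (by linarith) (by linarith)
  · rw [abs_of_pos (by linarith)]
    exact Real.cos_lt_cos_of_lt_of_lt_two_pi_sub (by linarith) (by linarith) (by linarith)

theorem eq_mul_exp_arg_div {z r : ℂ} (h : ‖z‖ = ‖r‖) (hr : r ≠ 0) :
    z = r * exp (arg (z / r) * I) := by
  have h1 : ‖z / r‖ = 1 := by rw [norm_div, h, div_self (norm_ne_zero_iff.mpr hr)]
  have := norm_mul_exp_arg_mul_I (z / r)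
  rw [h1, ofReal_one, one_mul] at this
  rw [this, mul_div_cancel₀ _ hr]

theorem div_mem_slitPlane_of_ne_neg {z r : ℂ} (h : ‖z‖ = ‖r‖) (hr : r ≠ 0) (hz : z ≠ -r) :
    z / r ∈ slitPlane := by
  refine mem_slitPlane_iff_arg.mpr ⟨fun harg => hz ?_, div_ne_zero ?_ hr⟩
  · rw [eq_mul_exp_arg_div h hr, harg, exp_pi_mul_I, mul_neg_one]
  · exact norm_ne_zero_iff.mp (h ▸ norm_ne_zero_iff.mpr hr)

theorem mul_exp_mul_conj_mul_exp {r : ℂ} (hr : ‖r‖ = 1) (α β : ℝ) :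
    r * exp (α * I) * conj (r * exp (β * I)) = exp ((α - β : ℝ) * I) := by
  have hrr : r * conj r = 1 := by rw [mul_conj, normSq_eq_norm_sq, hr]; norm_num
  rw [map_mul, ← exp_conj, map_mul, conj_ofReal, conj_I, mul_mul_mul_comm, hrr, one_mul,
    ← exp_add]
  congr 1
  push_cast
  ring

theorem arg_div_notMem_Icc_of_mem_gap {E G : Set ℂ} (hE : E ⊆ Metric.sphere 0 1)
    (hG : G ⊆ Metric.sphere 0 1) (hGpre : IsPreconnected G) (hGE : Disjoint G E) {r : ℂ}
    (hr : -r ∈ E) {v₁ v₂ z : ℂ} (hv₁ : v₁ ∈ G) (hv₂ : v₂ ∈ G) (hz : z ∈ E) :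
    arg (z / r) ∉ Set.Icc (arg (v₁ / r)) (arg (v₂ / r)) := by
  have hr1 : ‖r‖ = 1 := by simpa using hE hr
  have hr0 : r ≠ 0 := norm_ne_zero_iff.mp (by simp [hr1])
  have hunit : ∀ {w}, w ∈ G ∪ E → ‖w‖ = ‖r‖ := fun hw => by
    rw [hr1]; simpa using hw.elim (fun h => hG h) (fun h => hE h)
  have hcont : ContinuousOn (fun w => arg (w / r)) G := fun w hw =>
    ((continuousAt_arg (div_mem_slitPlane_of_ne_neg (hunit (.inl hw)) hr0
      (hGE.ne_of_mem hw hr))).comp (f := (· / r)) (continuousAt_id.div_const r)).continuousWithinAt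
  intro hmem
  obtain ⟨w, hw, hθ : arg (w / r) = arg (z / r)⟩ :=
    (hGpre.image _ hcont).ordConnected.out ⟨v₁, hv₁, rfl⟩ ⟨v₂, hv₂, rfl⟩ hmem
  refine hGE.ne_of_mem hw hz ?_
  rw [eq_mul_exp_arg_div (hunit (.inl hw)) hr0, eq_mul_exp_arg_div (hunit (.inr hz)) hr0, hθ]

theorem exists_re_lt_cos_of_mem_gap {E G : Set ℂ} (hE : E ⊆ Metric.sphere 0 1)
    (hE₀ : E.Nonempty) (hG : G ⊆ Metric.sphere 0 1) (hGpre : IsPreconnected G)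
    (hGE : Disjoint G E) {v₁ v₂ : ℂ} (hv₁ : v₁ ∈ G) (hv₂ : v₂ ∈ G) :
    ∃ (q : ℂ) (g : ℝ), ‖q‖ = 1 ∧
      (X - C v₁) * (X - C v₂) = (X - C (q * exp (-g * I))) * (X - C (q * exp (g * I))) ∧
      ∀ z ∈ E, (z * conj q).re < Real.cos g := by
  -- angles are measured by `arg (· / -p)`, whose branch cut sits at `p ∈ E`, off the gap
  obtain ⟨p, hp⟩ := hE₀
  have hp1 : ‖p‖ = 1 := by simpa using hE hp
  have hp0 : -p ≠ 0 := neg_ne_zero.mpr (norm_ne_zero_iff.mp (by simp [hp1]))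
  have hunit : ∀ {w}, w ∈ G ∪ E → ‖w‖ = ‖-p‖ := fun hw => by
    rw [norm_neg, hp1]; simpa using hw.elim (fun h => hG h) (fun h => hE h)
  wlog hle : arg (v₁ / -p) ≤ arg (v₂ / -p) generalizing v₁ v₂
  · obtain ⟨q, g, hq, hpair, hlt⟩ := this hv₂ hv₁ (le_of_not_ge hle)
    exact ⟨q, g, hq, by rw [mul_comm, hpair], hlt⟩
  set s := arg (v₁ / -p)
  set t := arg (v₂ / -p)
  have ht : t < π := lt_of_le_of_ne (arg_le_pi _) <| slitPlane_arg_ne_pi <|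
    div_mem_slitPlane_of_ne_neg (hunit (.inl hv₂)) hp0
      (by rw [neg_neg]; exact hGE.ne_of_mem hv₂ hp)
  refine ⟨-p * exp (((s + t) / 2 : ℝ) * I), (t - s) / 2, ?_, ?_, fun z hz => ?_⟩
  · rw [norm_mul, norm_neg, hp1, norm_exp_ofReal_mul_I, one_mul]
  · have hrot : ∀ {v}, v ∈ G → ∀ α β : ℂ, (arg (v / -p) : ℂ) = α + β →
        -p * exp (α * I) * exp (β * I) = v := fun hv α β h => by
      conv_rhs => rw [eq_mul_exp_arg_div (hunit (.inl hv)) hp0, h]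
      rw [mul_assoc, ← exp_add, add_mul]
    rw [hrot hv₁ _ _ (by push_cast; ring), hrot hv₂ _ _ (by push_cast; ring)]
  · rw [eq_mul_exp_arg_div (hunit (.inr hz)) hp0, mul_exp_mul_conj_mul_exp (by rwa [norm_neg]),
      exp_ofReal_mul_I_re]
    exact Real.cos_sub_lt_cos_of_notMem_Icc (arg_mem_Ioc _) (neg_pi_lt_arg _) hle ht
      (arg_div_notMem_Icc_of_mem_gap hE hG hGpre hGE (by rwa [neg_neg]) hv₁ hv₂ hz)

theorem exists_cos_lt_forall_re_lt {K : Set ℂ} (hK : IsCompact K) (hK₀ : K.Nonempty)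
    (hK₁ : K ⊆ Metric.sphere 0 1) {q : ℂ} (hq : ‖q‖ = 1) {g : ℝ}
    (h : ∀ z ∈ K, (z * conj q).re < Real.cos g) :
    ∃ g' : ℝ, Real.cos g' < Real.cos g ∧ ∀ z ∈ K, (z * conj q).re < Real.cos g' := by
  have hcont : ContinuousOn (fun z : ℂ => (z * conj q).re) K := by fun_prop
  set M := sSup ((fun z : ℂ => (z * conj q).re) '' K)
  have hM : M < Real.cos g := (hK.sSup_lt_iff_of_continuous hK₀ hcont _).2 h
  have hle : ∀ z ∈ K, (z * conj q).re ≤ M := fun z hz =>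
    le_csSup (hK.bddAbove_image hcont) (Set.mem_image_of_mem _ hz)
  obtain ⟨z₀, hz₀⟩ := hK₀
  have hM₁ : -1 ≤ M := by
    have h1 : ‖z₀ * conj q‖ = 1 := by simpa [hq] using hK₁ hz₀
    linarith [neg_abs_le (z₀ * conj q).re, abs_re_le_norm (z₀ * conj q), hle z₀ hz₀]
  refine ⟨Real.arccos ((M + Real.cos g) / 2), ?_, fun z hz => ?_⟩ <;>
    rw [Real.cos_arccos (by linarith [Real.neg_one_le_cos g]) (by linarith [Real.cos_le_one g])]
  · linarith
  · linarith [hle z hz]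

theorem IsCompact.sSup_image_mul_lt {α : Type*} [TopologicalSpace α] {K : Set α}
    (hK : IsCompact K) {a b R : α → ℝ} (ha : ContinuousOn a K) (hb : ContinuousOn b K)
    (hR : ContinuousOn R K) (ha₀ : ∀ x ∈ K, 0 ≤ a x) (hab : ∀ x ∈ K, a x < b x)
    (hR₀ : ∀ x ∈ K, 0 ≤ R x) (hRne : ∃ x ∈ K, R x ≠ 0) :
    sSup ((fun x => a x * R x) '' K) < sSup ((fun x => b x * R x) '' K) := by
  obtain ⟨y, hy, hRy⟩ := hRne
  obtain ⟨x, hx, hsup, -⟩ :=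
    hK.exists_sSup_image_eq_and_ge ⟨y, hy⟩ (f := fun x => a x * R x) (ha.mul hR)
  have hle : ∀ w ∈ K, b w * R w ≤ sSup ((fun x => b x * R x) '' K) := fun w hw =>
    le_csSup (hK.bddAbove_image (hb.mul hR)) (Set.mem_image_of_mem _ hw)
  rw [hsup]
  rcases (hR₀ x hx).eq_or_lt with h | h
  · rw [← h, mul_zero]
    exact (mul_pos ((ha₀ y hy).trans_lt (hab y hy)) ((hR₀ y hy).lt_of_ne' hRy)).trans_le (hle y hy)
  · exact (mul_lt_mul_of_pos_right (hab x hx) h).trans_le (hle x hx)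

theorem Polynomial.exists_eq_mul_of_two_le_card_filter_roots {R : Type*} [CommRing R]
    [IsDomain R] {T : R[X]} (hT : T ≠ 0) {p : R → Prop} [DecidablePred p]
    (h : 2 ≤ Multiset.card (T.roots.filter p)) :
    ∃ w₁ w₂ Q, p w₁ ∧ p w₂ ∧ T = (X - C w₁) * (X - C w₂) * Q := by
  obtain ⟨w₁, hw₁⟩ :=
    Multiset.card_pos_iff_exists_mem.mp (by omega : 0 < Multiset.card (T.roots.filter p))
  obtain ⟨s, hs⟩ := Multiset.exists_cons_of_mem hw₁
  obtain ⟨w₂, hw₂⟩ := Multiset.card_pos_iff_exists_mem.mp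
    (by rw [hs, Multiset.card_cons] at h; omega : 0 < Multiset.card s)
  have hle : {w₁, w₂} ≤ T.roots.filter p := by
    obtain ⟨s', rfl⟩ := Multiset.exists_cons_of_mem hw₂
    rw [hs]
    exact Multiset.cons_le_cons _ (Multiset.cons_le_cons _ (Multiset.zero_le _))
  obtain ⟨Q, hQ⟩ :=
    (Multiset.prod_X_sub_C_dvd_iff_le_roots hT _).mpr (hle.trans (Multiset.filter_le _ _))
  refine ⟨w₁, w₂, Q, Multiset.of_mem_filter hw₁,
    Multiset.of_mem_filter (hs ▸ Multiset.mem_cons_of_mem hw₂), ?_⟩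
  simpa using hQ

theorem exists_monic_sSup_lt_of_two_roots_mem_gap {E G : Set ℂ} (hEc : IsCompact E)
    (hEi : E.Infinite) (hE : E ⊆ Metric.sphere 0 1) (hG : G ⊆ Metric.sphere 0 1)
    (hGpre : IsPreconnected G) (hGE : Disjoint G E) [DecidablePred (· ∈ G)] {T : ℂ[X]}
    (hT : T.Monic) (hTroots : ∀ z ∈ T.roots, ‖z‖ = 1)
    (h2 : 2 ≤ Multiset.card (T.roots.filter (· ∈ G))) :
    ∃ P : ℂ[X], P.Monic ∧ P.natDegree = T.natDegree ∧ (∀ z ∈ P.roots, ‖z‖ = 1) ∧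
      sSup ((fun z => ‖P.eval z‖) '' E) < sSup ((fun z => ‖T.eval z‖) '' E) := by
  obtain ⟨w₁, w₂, Q, hw₁, hw₂, rfl⟩ := exists_eq_mul_of_two_le_card_filter_roots hT.ne_zero h2
  obtain ⟨q, g, hq, hpair, hEg⟩ := exists_re_lt_cos_of_mem_gap hE hEi.nonempty hG hGpre hGE hw₁ hw₂
  obtain ⟨g', hg', hEg'⟩ := exists_cos_lt_forall_re_lt hEc hEi.nonempty hE hq hEg
  rw [hpair] at hT hTroots ⊢
  have hpair_monic : ∀ g : ℝ, ((X - C (q * exp (-g * I))) * (X - C (q * exp (g * I)))).Monic :=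
    fun _ => (monic_X_sub_C _).mul (monic_X_sub_C _)
  have hQ : Q.Monic := (hpair_monic g).of_mul_monic_left hT
  refine ⟨_ * Q, (hpair_monic g').mul hQ, ?_, fun z hz => ?_, ?_⟩
  · rw [(hpair_monic g').natDegree_mul hQ, (hpair_monic g).natDegree_mul hQ,
      (monic_X_sub_C _).natDegree_mul (monic_X_sub_C _),
      (monic_X_sub_C _).natDegree_mul (monic_X_sub_C _)]
    simp only [natDegree_X_sub_C]
  · rw [roots_mul ((hpair_monic g').mul hQ).ne_zero, roots_mul (hpair_monic g').ne_zero,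
      roots_X_sub_C, roots_X_sub_C] at hz
    rcases Multiset.mem_add.mp hz with hz | hz
    · rcases Multiset.mem_add.mp hz with hz | hz <;>
        simp [Multiset.mem_singleton.mp hz, hq, norm_exp]
    · exact hTroots z (Multiset.mem_of_le (roots.le_of_dvd hT.ne_zero (dvd_mul_left _ _)) hz)
  · simp only [eval_mul, norm_mul, eval_sub, eval_X, eval_C]
    refine hEc.sSup_image_mul_lt (by fun_prop) (by fun_prop) (by fun_prop)
      (fun _ _ => by positivity) (fun z hz => ?_) (fun _ _ => norm_nonneg _) ?_
    · exact norm_sub_mul_norm_sub_exp_lt (by simpa using hE hz) hq (hEg' z hz) hg'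
    · by_contra! hQE
      refine hQ.ne_zero (eq_zero_of_infinite_isRoot Q (hEi.mono fun z hz => ?_))
      simpa using hQE z hz

theorem isCompact_arc (a b : ℝ) : IsCompact (arc a b) :=
  isCompact_Icc.image (by fun_prop)

theorem arc_subset_sphere (a b : ℝ) : arc a b ⊆ Metric.sphere 0 1 := by
  rintro _ ⟨θ, -, rfl⟩
  simp [norm_exp_ofReal_mul_I]

theorem arc_infinite {a b : ℝ} (hab : a < b) (hlen : b - a < 2 * π) : (arc a b).Infinite :=
  (Set.Icc_infinite hab).image fun _ hx _ hy h =>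
    Circle.exp_injOn_Icc hlen hx hy (Subtype.ext (by simpa [Circle.coe_exp] using h))

open scoped Classical in
theorem stmt19_general (n ℓ : ℕ) (hℓ : 1 ≤ ℓ) (a b : Fin ℓ → ℝ)
    (hab : ∀ j, a j < b j) (hlen : ∀ j, b j - a j < 2 * Real.pi)
    (T : Polynomial ℂ) (hmonic : T.Monic) (hdeg : T.natDegree = n)
    (hTroots : ∀ z ∈ T.roots, ‖z‖ = 1)
    (hmin : ∀ P : Polynomial ℂ, P.Monic → P.natDegree = n →
      (∀ z ∈ P.roots, ‖z‖ = 1) →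
      sSup ((fun z => ‖T.eval z‖) '' ⋃ j, arc (a j) (b j))
        ≤ sSup ((fun z => ‖P.eval z‖) '' ⋃ j, arc (a j) (b j)))
    (z₀ : ℂ) :
    (T.roots.filter (fun w =>
      w ∈ connectedComponentIn (Metric.sphere (0 : ℂ) 1 \ ⋃ j, arc (a j) (b j)) z₀)).card
      ≤ 1 := by
  by_contra! h2
  have hEi : (⋃ j, arc (a j) (b j)).Infinite :=
    (arc_infinite (hab ⟨0, hℓ⟩) (hlen _)).mono (Set.subset_iUnion (fun j => arc (a j) (b j)) _)
  have hgap := connectedComponentIn_subset (Metric.sphere (0 : ℂ) 1 \ ⋃ j, arc (a j) (b j)) z₀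
  obtain ⟨P, hPmonic, hPdeg, hProots, hlt⟩ := exists_monic_sSup_lt_of_two_roots_mem_gap
    (isCompact_iUnion fun _ => isCompact_arc _ _) hEi
    (Set.iUnion_subset fun _ => arc_subset_sphere _ _) (hgap.trans Set.sdiff_subset)
    isPreconnected_connectedComponentIn (Set.disjoint_left.mpr fun _ hz => (hgap hz).2)
    hmonic hTroots h2
  exact (hmin P hPmonic (hPdeg.trans hdeg) hProots).not_gt hlt

open scoped Classical in
/-- Theorem 8.5(i): a restricted Chebyshev polynomial for a finite union `E` of
disjoint nondegenerate closed arcs (a monic polynomial of degree `n` with all zeros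
on `∂𝔻` minimizing `sup_E |P|` among all such polynomials) has at most one zero
(with multiplicity) in each gap, i.e., in each connected component of `∂𝔻 \ E`. -/
theorem stmt19 (n ℓ : ℕ) (hℓ : 1 ≤ ℓ) (a b : Fin ℓ → ℝ)
    (hab : ∀ j, a j < b j) (hlen : ∀ j, b j - a j < 2 * Real.pi)
    (hdisj : Pairwise fun j k => Disjoint (arc (a j) (b j)) (arc (a k) (b k)))
    (T : Polynomial ℂ) (hmonic : T.Monic) (hdeg : T.natDegree = n)
    (hTroots : ∀ z ∈ T.roots, ‖z‖ = 1)
    (hmin : ∀ P : Polynomial ℂ, P.Monic → P.natDegree = n →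
      (∀ z ∈ P.roots, ‖z‖ = 1) →
      sSup ((fun z => ‖T.eval z‖) '' ⋃ j, arc (a j) (b j))
        ≤ sSup ((fun z => ‖P.eval z‖) '' ⋃ j, arc (a j) (b j)))
    (z₀ : ℂ) (hz₀ : z₀ ∈ Metric.sphere (0 : ℂ) 1 \ ⋃ j, arc (a j) (b j)) :
    (T.roots.filter (fun w =>
      w ∈ connectedComponentIn (Metric.sphere (0 : ℂ) 1 \ ⋃ j, arc (a j) (b j)) z₀)).card
      ≤ 1 :=
  stmt19_general n ℓ hℓ a b hab hlen T hmonic hdeg hTroots hmin z₀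
end
end
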